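/- arXiv:2602.09072 — 3 statements merged into one kernel-verified Lean document; each statement's English description precedes it below -/
import Mathlib

section
/- For every k ≥ 2, L_circ(k) ≤ L(k−1) + 1, where L(m) denotes the minimal length of a (linear) m-superpattern and L_circ(k) denotes the minimal length of a circular k-superpattern. -/
/-!
Rotate `σ ∈ S_(m+1)` so that its maximum `m + 1` comes last. What precedes it is a permutation in
`S_m`, hence occurs in a minimal `m`-superpattern `w`, and appending a new maximum to `w` realises
the rotated `σ`.

For `L(m)` to be attained some `m`-superpattern must exist. The grid permutation of length `m²`
puts the value `s m + (m - j)` at position `j m + s` (`j, s < m`); choosing in block `j` the entry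
with `s = σ(j) - 1` yields values ordered first by `σ(j)`, so they realise `σ`.
-/

/-- `l` is the one-line notation of a permutation of `{1, …, n}`. -/
def IsPermList (n : ℕ) (l : List ℕ) : Prop := l.Perm ((List.range n).map (· + 1))

/-- The pattern `σ` occurs as an order-isomorphic subsequence of the word `w`:
there are indices `i₁ < ⋯ < i_k` with `w (i_p) < w (i_q)` exactly when `σ p < σ q`. -/
def OrderIsoContains (w σ : List ℕ) : Prop :=
  ∃ f : Fin σ.length → Fin w.length, StrictMono f ∧
    ∀ p q : Fin σ.length, w.get (f p) < w.get (f q) ↔ σ.get p < σ.get q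

/-- `w` contains every permutation of length `k` as an order-isomorphic subsequence. -/
def IsSuperpattern (k : ℕ) (w : List ℕ) : Prop :=
  ∀ σ : List ℕ, IsPermList k σ → OrderIsoContains w σ

/-- `w` circularly contains every permutation of length `k`: some rotation
`ρ_r σ = σ.rotate r` occurs as an order-isomorphic subsequence of `w`. -/
def IsCircSuperpattern (k : ℕ) (w : List ℕ) : Prop :=
  ∀ σ : List ℕ, IsPermList k σ → ∃ r < k, OrderIsoContains w (σ.rotate r)

/-- `L(k)`: minimal length of a linear `k`-superpattern. -/
noncomputable def Llin (k : ℕ) : ℕ :=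
  sInf {n | ∃ w : List ℕ, IsPermList n w ∧ IsSuperpattern k w}

/-- `L_circ(k)`: minimal length of a circular `k`-superpattern. -/
noncomputable def Lcirc (k : ℕ) : ℕ :=
  sInf {n | ∃ w : List ℕ, IsPermList n w ∧ IsCircSuperpattern k w}

theorem orderIsoContains_iff_exists_sublist {w σ : List ℕ} :
    OrderIsoContains w σ ↔ ∃ u : List ℕ, u.Sublist w ∧ u.length = σ.length ∧
      ∀ x ∈ u.zip σ, ∀ y ∈ u.zip σ, x.1 < y.1 ↔ x.2 < y.2 := by
  constructor
  · rintro ⟨f, hf, hiff⟩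
    have hlen : (List.ofFn (w.get ∘ f)).length = σ.length := List.length_ofFn
    refine ⟨List.ofFn (w.get ∘ f), ?_, hlen, ?_⟩
    · refine List.sublist_iff_exists_fin_orderEmbedding_get_eq.mpr
        ⟨OrderEmbedding.ofStrictMono (f ∘ Fin.cast hlen)
          (hf.comp (Fin.castOrderIso hlen).strictMono),
          fun _ => List.get_ofFn _ _⟩
    · have hmem : ∀ x ∈ (List.ofFn (w.get ∘ f)).zip σ, ∃ i, x = (w.get (f i), σ.get i) := by
        intro x hx
        obtain ⟨i, hi, rfl⟩ := List.mem_iff_getElem.mp hx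
        simp only [List.length_zip, lt_min_iff] at hi
        exact ⟨⟨i, hi.2⟩, by simp⟩
      intro x hx y hy
      obtain ⟨p, rfl⟩ := hmem x hx
      obtain ⟨q, rfl⟩ := hmem y hy
      exact hiff p q
  · rintro ⟨u, hsub, hlen, hzip⟩
    obtain ⟨g, hg⟩ := List.sublist_iff_exists_fin_orderEmbedding_get_eq.mp hsub
    refine ⟨g ∘ Fin.cast hlen.symm, g.strictMono.comp (Fin.castOrderIso hlen.symm).strictMono,
      fun p q => ?_⟩
    have hmem : ∀ i : Fin σ.length, (u.get (i.cast hlen.symm), σ.get i) ∈ u.zip σ := fun i => by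
      have hi : (i : ℕ) < (u.zip σ).length := by simp [hlen]
      simpa using List.getElem_mem hi
    simpa only [Function.comp_apply, ← hg] using hzip _ (hmem p) _ (hmem q)

theorem OrderIsoContains.append_singleton {w γ : List ℕ} {c d : ℕ} (h : OrderIsoContains w γ)
    (hw : ∀ x ∈ w, x < c) (hγ : ∀ x ∈ γ, x < d) :
    OrderIsoContains (w ++ [c]) (γ ++ [d]) := by
  rw [orderIsoContains_iff_exists_sublist] at h ⊢
  obtain ⟨u, hu, hlen, hzip⟩ := h
  have hbound : ∀ x ∈ u.zip γ, x.1 < c ∧ x.2 < d := fun x hx =>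
    ⟨hw _ (hu.subset (List.of_mem_zip hx).1), hγ _ (List.of_mem_zip hx).2⟩
  refine ⟨u ++ [c], hu.append (List.Sublist.refl _), by simp [hlen], ?_⟩
  simp only [List.zip_append hlen, List.zip_cons_cons, List.zip_nil_right, List.mem_append,
    List.mem_singleton]
  rintro x (hx | rfl) y (hy | rfl)
  · exact hzip x hx y hy
  · simp [hbound x hx]
  · exact iff_of_false (hbound y hy).1.not_gt (hbound y hy).2.not_gt
  · simp

theorem IsPermList.length_eq {n : ℕ} {l : List ℕ} (h : IsPermList n l) : l.length = n := by
  simpa using List.Perm.length_eq h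

theorem IsPermList.mem_iff {n x : ℕ} {l : List ℕ} (h : IsPermList n l) :
    x ∈ l ↔ 1 ≤ x ∧ x ≤ n := by
  rw [List.Perm.mem_iff h]
  simp only [List.mem_map, List.mem_range]
  constructor
  · rintro ⟨y, hy, rfl⟩
    omega
  · intro hx
    exact ⟨x - 1, by omega, by omega⟩

theorem IsPermList.nodup {n : ℕ} {l : List ℕ} (h : IsPermList n l) : l.Nodup :=
  (List.Perm.nodup_iff h).mpr (List.nodup_range.map (add_left_injective 1))

theorem isPermList_append_singleton_iff {n : ℕ} {l : List ℕ} :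
    IsPermList (n + 1) (l ++ [n + 1]) ↔ IsPermList n l := by
  rw [IsPermList, List.range_succ, List.map_append, List.map_singleton, List.perm_append_right_iff]
  rfl

theorem add_mul_lt_add_mul_iff_lex {m a b a' b' : ℕ} (hb : b < m) (hb' : b' < m) :
    b + m * a < b' + m * a' ↔ a < a' ∨ a = a' ∧ b < b' := by
  constructor
  · intro h
    rcases lt_trichotomy a a' with ha | rfl | ha
    · exact Or.inl ha
    · exact Or.inr ⟨rfl, by omega⟩
    · have := Nat.mul_le_mul_left m ha
      rw [Nat.mul_succ] at this
      omega
  · rintro (ha | ⟨rfl, hlt⟩)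
    · have := Nat.mul_le_mul_left m ha
      rw [Nat.mul_succ] at this
      omega
    · omega

def gridPerm (m : ℕ) : Equiv.Perm (Fin (m * m)) :=
  finProdFinEquiv.permCongr ((Fin.revPerm.prodCongr (Equiv.refl _)).trans (Equiv.prodComm _ _))

theorem gridPerm_finProdFinEquiv {m : ℕ} (j s : Fin m) :
    gridPerm m (finProdFinEquiv (j, s)) = finProdFinEquiv (s, j.rev) := by
  simp [gridPerm, Equiv.permCongr_apply]

def gridPermList (m : ℕ) : List ℕ := List.ofFn fun t => (gridPerm m t : ℕ) + 1

theorem gridPermList_get {m : ℕ} (i : Fin (gridPermList m).length) :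
    (gridPermList m).get i = gridPerm m (i.cast (by simp [gridPermList])) + 1 :=
  List.get_ofFn _ _

theorem isPermList_gridPermList (m : ℕ) : IsPermList (m * m) (gridPermList m) := by
  have hrange : List.ofFn (fun t : Fin (m * m) => (t : ℕ) + 1) = (List.range (m * m)).map (· + 1) :=
    List.ext_getElem (by simp) fun i _ _ => by simp
  rw [IsPermList, ← hrange]
  exact (gridPerm m).ofFn_comp_perm fun t => (t : ℕ) + 1

theorem isSuperpattern_gridPermList (m : ℕ) : IsSuperpattern m (gridPermList m) := by
  intro σ hσ
  have hlen : σ.length = m := hσ.length_eq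
  have hbound (p : Fin σ.length) : 1 ≤ σ.get p ∧ σ.get p ≤ m := hσ.mem_iff.mp (List.get_mem σ p)
  let block (p : Fin σ.length) : Fin m := p.cast hlen
  let offset (p : Fin σ.length) : Fin m := ⟨σ.get p - 1, by have := hbound p; omega⟩
  let pos (p : Fin σ.length) : Fin (gridPermList m).length :=
    (finProdFinEquiv (block p, offset p)).cast (by simp [gridPermList])
  have hpos (p : Fin σ.length) :
      (gridPermList m).get (pos p) = ((block p).rev : ℕ) + m * (offset p) + 1 := by
    rw [gridPermList_get]
    show (gridPerm m (finProdFinEquiv (block p, offset p)) : ℕ) + 1 = _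
    rw [gridPerm_finProdFinEquiv, finProdFinEquiv_apply_val]
  refine ⟨pos, fun p q hpq => ?_, fun p q => ?_⟩
  · show (offset p : ℕ) + m * (block p) < (offset q : ℕ) + m * (block q)
    exact (add_mul_lt_add_mul_iff_lex (offset p).isLt (offset q).isLt).mpr (Or.inl hpq)
  · rw [hpos, hpos, Nat.add_lt_add_iff_right,
      add_mul_lt_add_mul_iff_lex (block p).rev.isLt (block q).rev.isLt]
    have hinj : σ.get p = σ.get q → p = q := (hσ.nodup.get_inj_iff).mp
    have hp := hbound p
    have hq := hbound q
    simp only [offset, block, Fin.val_rev, Fin.val_cast]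
    constructor
    · rintro (h | ⟨h, h'⟩)
      · omega
      · have := hinj (by omega)
        subst this
        omega
    · intro h
      omega

theorem exists_rotate_eq_append_singleton {α : Type*} {l : List α} {a : α} (h : a ∈ l) :
    ∃ r < l.length, ∃ γ, l.rotate r = γ ++ [a] := by
  obtain ⟨s, t, rfl⟩ := List.append_of_mem h
  refine ⟨(s ++ [a]).length % (s ++ a :: t).length, Nat.mod_lt _ (by simp), t ++ s, ?_⟩
  rw [List.rotate_mod]
  simpa using List.rotate_append_length_eq (s ++ [a]) t

theorem IsSuperpattern.isCircSuperpattern_append_singleton {m n : ℕ} {w : List ℕ}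
    (hsup : IsSuperpattern m w) (hw : IsPermList n w) :
    IsCircSuperpattern (m + 1) (w ++ [n + 1]) := by
  intro σ hσ
  obtain ⟨r, hr, γ, hrot⟩ := exists_rotate_eq_append_singleton (hσ.mem_iff.mpr ⟨by omega, le_rfl⟩)
  have hγ : IsPermList m γ := isPermList_append_singleton_iff.mp (hrot ▸ (σ.rotate_perm r).trans hσ)
  refine ⟨r, hσ.length_eq ▸ hr, hrot ▸ (hsup γ hγ).append_singleton (fun x hx => ?_) fun x hx => ?_⟩
  · exact Nat.lt_succ_of_le (hw.mem_iff.mp hx).2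
  · exact Nat.lt_succ_of_le (hγ.mem_iff.mp hx).2

theorem exists_isSuperpattern_of_length_Llin (m : ℕ) :
    ∃ w, IsPermList (Llin m) w ∧ IsSuperpattern m w :=
  Nat.sInf_mem (s := {n | ∃ w, IsPermList n w ∧ IsSuperpattern m w})
    ⟨m * m, gridPermList m, isPermList_gridPermList m, isSuperpattern_gridPermList m⟩

theorem Lcirc_succ_le_Llin_add_one (m : ℕ) : Lcirc (m + 1) ≤ Llin m + 1 := by
  obtain ⟨w, hw, hsup⟩ := exists_isSuperpattern_of_length_Llin m
  exact Nat.sInf_le ⟨w ++ [Llin m + 1], isPermList_append_singleton_iff.mpr hw,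
    hsup.isCircSuperpattern_append_singleton hw⟩

/-- `L_circ(k) ≤ L(k−1) + 1` for every `k ≥ 2`. -/
theorem Lcirc_le_Llin_pred_add_one (k : ℕ) (hk : 2 ≤ k) :
    Lcirc k ≤ Llin (k - 1) + 1 := by
  obtain ⟨m, rfl⟩ : ∃ m, k = m + 1 := ⟨k - 1, by omega⟩
  simpa using Lcirc_succ_le_Llin_add_one m
end

section
/- For every permutation σ = (σ_1, …, σ_k) of {1, …, k} and every m ≥ 1, σ occurs as an exact subsequence of the zigzag word zz(m, k+1) if and only if m ≥ k + S(σ); in other words, the minimal number of runs of a zigzag word of alphabet width k+1 containing σ as an exact subsequence equals k + S(σ). -/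
/-- Parity sign: `1` for even integers, `-1` for odd integers. -/
def pSign (x : ℤ) : ℤ := if Even x then 1 else -1

/-- Local cost `C_{xy} = δ_{xy} − ((p_x p_y + 1)/2)·sgn(x−y)·p_x`. -/
def locCost (x y : ℤ) : ℤ :=
  (if x = y then 1 else 0) - ((pSign x * pSign y + 1) / 2) * (x - y).sign * pSign x

/-- Sum of local costs over consecutive pairs of the sequence. -/
def pairCostSum (l : List ℤ) : ℤ := ((l.zip l.tail).map fun q => locCost q.1 q.2).sum

/-- Score `S(σ) = (1 + p_{σ₁})/2 + Σ_{i=1}^{k-1} C_{σ_i σ_{i+1}}`. -/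
def score (l : List ℤ) : ℤ := (1 + pSign (l.headD 0)) / 2 + pairCostSum l

/-- Circular score `S^c(σ) = Σ_{i=1}^{k} C_{σ_i, σ_{(i mod k)+1}}` (indices cyclic). -/
def cscore (l : List ℤ) : ℤ := ((l.zip (l.rotate 1)).map fun q => locCost q.1 q.2).sum

/-- The `j`-th run of the zigzag word over alphabet `{1, …, q}`: for odd `j` the odd
numbers in increasing order, for even `j` the even numbers in decreasing order. -/
def zrun (j q : ℕ) : List ℕ :=
  if j % 2 = 1 then (List.range (q + 1)).filter (fun n => n % 2 = 1)
  else ((List.range (q + 1)).filter (fun n => n % 2 = 0 && n != 0)).reverse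

/-- The zigzag word `zz(m, q) = R₁ R₂ ⋯ R_m`. -/
def zz (m q : ℕ) : List ℕ := ((List.range m).map fun j => zrun (j + 1) q).flatten

/-!
Embed the word greedily, each letter as early as possible in the zigzag word. From a letter `x`
to the next letter `y` the embedding stays in the same run if `y` has the parity of `x` and
comes later in that run, moves to the next run if the parities differ, and otherwise has to
skip to the next run of the same parity: it advances by `1 + C_{xy}` runs. Greedy embedding is
optimal, so the word fits into `m` runs exactly when the total advance is at most `m`. Starting
from a virtual letter `0` at the end of an empty even run `0` in front of `zz`, the first letter
`y` costs `1 + C_{0y} = 1 + (1 + p_y)/2`, so the total advance is `k + S(σ)`.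
-/

namespace List

variable {α : Type*}

theorem cons_sublist_append_iff_of_notMem {a : α} {l l₁ l₂ : List α} (h : a ∉ l₁) :
    a :: l <+ l₁ ++ l₂ ↔ a :: l <+ l₂ := by
  refine ⟨fun hs => ?_, fun hs => hs.trans (sublist_append_right l₁ l₂)⟩
  induction l₁ with
  | nil => exact hs
  | cons b l₁ ih =>
    rw [mem_cons, not_or] at h
    exact ih h.2 (hs.of_cons_of_ne h.1)

theorem cons_sublist_append_iff_of_pairwise {r : α → α → Bool}
    (hr : ∀ a b, r a b → r b a = false) {R : List α} (hR : R.Pairwise fun a b => r a b)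
    {y : α} (hy : y ∈ R) (ys L : List α) :
    y :: ys <+ R ++ L ↔ ys <+ R.filter (r y) ++ L := by
  induction R with
  | nil => cases hy
  | cons a R ih =>
    rw [pairwise_cons] at hR
    by_cases hya : y = a
    · subst hya
      have hyy : r y y = false := by
        cases h : r y y
        · rfl
        · simpa [h] using hr y y h
      rw [filter_cons_of_neg (by simp [hyy]), filter_eq_self.2 hR.1, cons_append,
        cons_sublist_cons]
    · have hyR : y ∈ R := (mem_cons.1 hy).resolve_left hya
      rw [filter_cons_of_neg (by simp [hr a y (hR.1 y hyR)]), ← ih hR.2 hyR]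
      exact cons_sublist_append_iff_of_notMem (l₁ := [a]) (by simpa using hya)

end List

open scoped List

def runPrecedes (s x n : ℕ) : Bool := if s % 2 = 1 then x < n else n < x

def runAfter (s q x : ℕ) : List ℕ := (zrun s q).filter (runPrecedes s x)

def zzFrom (s m q : ℕ) : List ℕ := ((List.range m).map fun j => zrun (j + s) q).flatten

def stepCost (x y : ℕ) : ℕ := if x % 2 ≠ y % 2 then 1 else if runPrecedes x x y then 0 else 2

/-- The number of runs, from run `s` on, up to the first one containing the letter `y`. -/
def startCost (s y : ℕ) : ℕ := if y % 2 = s % 2 then 1 else 2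

/-- The number of runs, beyond the one holding `x`, that the greedy (leftmost) embedding of
a word needs when it continues after the letter `x`. -/
def pathCost : ℕ → List ℕ → ℕ
  | _, [] => 0
  | x, y :: ys => stepCost x y + pathCost y ys

theorem zz_eq_zzFrom (m q : ℕ) : zz m q = zzFrom 1 m q := rfl

theorem zzFrom_zero (s q : ℕ) : zzFrom s 0 q = [] := rfl

theorem zzFrom_succ (s m q : ℕ) : zzFrom s (m + 1) q = zrun s q ++ zzFrom (s + 1) m q := by
  simp only [zzFrom, List.range_succ_eq_map, List.map_cons, List.map_map, List.flatten_cons,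
    Nat.zero_add, Function.comp_def, Nat.succ_add, Nat.succ_eq_add_one, Nat.add_assoc]

theorem mem_zrun {n s q : ℕ} : n ∈ zrun s q ↔ n % 2 = s % 2 ∧ 1 ≤ n ∧ n ≤ q := by
  rcases Nat.mod_two_eq_zero_or_one s with h | h <;>
    simp [zrun, h, List.mem_filter, List.mem_range] <;> omega

theorem runPrecedes_asymm {s a b : ℕ} (h : runPrecedes s a b) : runPrecedes s b a = false := by
  unfold runPrecedes at *
  split at h <;> simp_all <;> omega

theorem runPrecedes_trans {s x y n : ℕ} (hxy : runPrecedes s x y) (hyn : runPrecedes s y n) :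
    runPrecedes s x n := by
  unfold runPrecedes at *
  split at hxy <;> simp_all <;> omega

theorem pairwise_zrun (s q : ℕ) : (zrun s q).Pairwise fun a b => runPrecedes s a b := by
  unfold zrun runPrecedes
  split_ifs
  · exact (List.pairwise_lt_range.filter _).imp fun hab => by simpa using hab
  · rw [List.pairwise_reverse]
    exact (List.pairwise_lt_range.filter _).imp fun hab => by simpa using hab

theorem mem_runAfter {n s q x : ℕ} : n ∈ runAfter s q x ↔ n ∈ zrun s q ∧ runPrecedes s x n := by
  simp [runAfter]

theorem runAfter_filter {s q x y : ℕ} (hxy : runPrecedes s x y) :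
    (runAfter s q x).filter (runPrecedes s y) = runAfter s q y := by
  rw [runAfter, runAfter, List.filter_filter]
  refine List.filter_congr fun n _ => ?_
  cases h : runPrecedes s y n
  · rfl
  · simp [runPrecedes_trans hxy h]

theorem cons_sublist_zrun_append {s q y : ℕ} (hy : y ∈ zrun s q) (ys L : List ℕ) :
    y :: ys <+ zrun s q ++ L ↔ ys <+ runAfter s q y ++ L :=
  List.cons_sublist_append_iff_of_pairwise (fun _ _ => runPrecedes_asymm) (pairwise_zrun s q)
    hy ys L

theorem cons_sublist_runAfter_append {s q x y : ℕ} (hy : y ∈ runAfter s q x) (ys L : List ℕ) :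
    y :: ys <+ runAfter s q x ++ L ↔ ys <+ runAfter s q y ++ L := by
  rw [← runAfter_filter (mem_runAfter.1 hy).2]
  exact List.cons_sublist_append_iff_of_pairwise (fun _ _ => runPrecedes_asymm)
    ((pairwise_zrun s q).filter _) hy ys L

theorem cons_sublist_zzFrom_iff {q y : ℕ} {ys : List ℕ} (hy : 1 ≤ y ∧ y ≤ q)
    (hys : ∀ t m, y % 2 = t % 2 →
      (ys <+ runAfter t q y ++ zzFrom (t + 1) m q ↔ pathCost y ys ≤ m)) (s m : ℕ) :
    y :: ys <+ zzFrom s m q ↔ startCost s y + pathCost y ys ≤ m := by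
  induction m generalizing s with
  | zero =>
    simp only [zzFrom_zero, List.sublist_nil, reduceCtorEq, false_iff, not_le, startCost]
    split <;> omega
  | succ m ih =>
    rw [zzFrom_succ]
    by_cases hpar : y % 2 = s % 2
    · rw [cons_sublist_zrun_append (mem_zrun.2 ⟨hpar, hy⟩), hys s m hpar, startCost, if_pos hpar]
      omega
    · rw [List.cons_sublist_append_iff_of_notMem (fun h => hpar (mem_zrun.1 h).1), ih,
        startCost, startCost, if_neg hpar, if_pos (by omega)]
      omega

theorem stepCost_eq_startCost {s q x y : ℕ} (hx : x % 2 = s % 2) (hy : 1 ≤ y ∧ y ≤ q)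
    (hxy : y ∉ runAfter s q x) : stepCost x y = startCost (s + 1) y := by
  rw [mem_runAfter, mem_zrun] at hxy
  unfold stepCost startCost runPrecedes at *
  split_ifs at * <;> simp only [decide_eq_true_eq] at * <;> omega

theorem stepCost_eq_zero {s q x y : ℕ} (hx : x % 2 = s % 2) (hxy : y ∈ runAfter s q x) :
    stepCost x y = 0 := by
  rw [mem_runAfter, mem_zrun] at hxy
  unfold stepCost runPrecedes at *
  split_ifs at * <;> simp only [decide_eq_true_eq] at * <;> omega

theorem sublist_runAfter_append_zzFrom_iff {q : ℕ} {l : List ℕ}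
    (hl : ∀ y ∈ l, 1 ≤ y ∧ y ≤ q) {x s : ℕ} (hx : x % 2 = s % 2) (m : ℕ) :
    l <+ runAfter s q x ++ zzFrom (s + 1) m q ↔ pathCost x l ≤ m := by
  induction l generalizing x s m with
  | nil => simp [pathCost]
  | cons y ys ih =>
    obtain ⟨hy, hys⟩ := List.forall_mem_cons.1 hl
    rw [pathCost.eq_2]
    by_cases hxy : y ∈ runAfter s q x
    · rw [cons_sublist_runAfter_append hxy, ih hys (mem_zrun.1 (mem_runAfter.1 hxy).1).1,
        stepCost_eq_zero hx hxy, zero_add]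
    · rw [List.cons_sublist_append_iff_of_notMem hxy,
        cons_sublist_zzFrom_iff hy (fun t m ht => ih hys ht m), stepCost_eq_startCost hx hy hxy]

/-- The empty even run `0`, read as ending with the letter `0`, can be prepended to `zz`. -/
theorem sublist_zz_iff_pathCost_le {q : ℕ} {l : List ℕ} (hl : ∀ y ∈ l, 1 ≤ y ∧ y ≤ q) (m : ℕ) :
    l <+ zz m q ↔ pathCost 0 l ≤ m := by
  have hempty : runAfter 0 q 0 = [] := by simp [runAfter, runPrecedes]
  rw [← sublist_runAfter_append_zzFrom_iff hl rfl, hempty, List.nil_append, zz_eq_zzFrom]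

theorem pSign_natCast (x : ℕ) : pSign (x : ℤ) = if x % 2 = 0 then 1 else -1 := by
  simp [pSign, Int.even_coe_nat, Nat.even_iff]

theorem stepCost_natCast (x y : ℕ) : (stepCost x y : ℤ) = 1 + locCost x y := by
  have hsign : ((x : ℤ) - y).sign = if x < y then -1 else if y < x then 1 else 0 := by
    rcases lt_trichotomy x y with h | rfl | h
    · rw [if_pos h]; exact Int.sign_eq_neg_one_iff_neg.2 (by omega)
    · simp
    · rw [if_neg (by omega), if_pos h]; exact Int.sign_eq_one_iff_pos.2 (by omega)
  unfold stepCost runPrecedes locCost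
  rw [pSign_natCast, pSign_natCast, hsign]
  split_ifs <;> simp_all <;> omega

theorem locCost_zero_natCast (y : ℕ) : locCost 0 y = (1 + pSign y) / 2 := by
  rcases Nat.eq_zero_or_pos y with rfl | hy
  · simp [locCost, pSign]
  · have hsign : ((0 : ℤ) - y).sign = -1 := Int.sign_eq_neg_one_iff_neg.2 (by omega)
    rw [locCost, if_neg (by omega), hsign]
    simp [pSign, add_comm]

theorem pairCostSum_cons_cons (a b : ℤ) (t : List ℤ) :
    pairCostSum (a :: b :: t) = locCost a b + pairCostSum (b :: t) := by
  simp [pairCostSum]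

theorem pathCost_natCast (x : ℕ) (l : List ℕ) :
    (pathCost x l : ℤ) = l.length + pairCostSum ((x :: l).map fun n : ℕ => (n : ℤ)) := by
  induction l generalizing x with
  | nil => simp [pathCost, pairCostSum]
  | cons y ys ih =>
    rw [pathCost.eq_2, List.map_cons, List.map_cons, pairCostSum_cons_cons, ← List.map_cons,
      Nat.cast_add, stepCost_natCast, ih, List.length_cons]
    push_cast
    ring

/-- Elaborated without the binder type, `l.map fun n => (n : ℤ)` lifts `l` through the list monad
and then maps the identity; this brings it back to the plain cast map. -/
theorem map_id_bind_pure_natCast (l : List ℕ) :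
    (l.map fun n => (n : ℤ)) = l.map fun n : ℕ => (n : ℤ) := by
  simp only [List.pure_def, List.bind_eq_flatMap, List.map_id_fun', id_eq, ← List.map_eq_flatMap]

/-- The initial term of the score is the local cost of a step from a virtual letter `0`. -/
theorem score_map_natCast {l : List ℕ} (hl : l ≠ []) :
    score (l.map fun n : ℕ => (n : ℤ)) = pairCostSum ((0 :: l).map fun n : ℕ => (n : ℤ)) := by
  obtain ⟨y, ys, rfl⟩ := List.exists_cons_of_ne_nil hl
  simp only [List.map_cons, pairCostSum_cons_cons, score, List.headD_cons, Nat.cast_zero,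
    locCost_zero_natCast]

/-- A permutation `σ` of `{1, …, k}` occurs as an exact subsequence of `zz(m, k+1)`
(for `m ≥ 1`) if and only if `m ≥ k + S(σ)`: the minimal number of runs of a zigzag
word of alphabet width `k+1` containing `σ` exactly equals `k + S(σ)`. -/
theorem sublist_zz_iff_runs_ge_score (k : ℕ) (l : List ℕ)
    (hl : l.Perm ((List.range k).map (· + 1))) (m : ℕ) (hm : 1 ≤ m) :
    l.Sublist (zz m (k + 1)) ↔
      (k : ℤ) + score (l.map fun n => (n : ℤ)) ≤ (m : ℤ) := by
  have hlen : l.length = k := by simpa using hl.length_eq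
  rcases eq_or_ne l [] with rfl | hne
  · obtain rfl : k = 0 := hlen.symm
    have hscore : score [] = 1 := by simp [score, pSign, pairCostSum]
    rw [map_id_bind_pure_natCast, List.map_nil, hscore, Nat.cast_zero, zero_add]
    exact iff_of_true (List.nil_sublist _) (by exact_mod_cast hm)
  have hbounds : ∀ y ∈ l, 1 ≤ y ∧ y ≤ k + 1 := by
    intro y hy
    obtain ⟨a, ha, rfl⟩ := List.mem_map.1 (hl.subset hy)
    rw [List.mem_range] at ha
    omega
  rw [sublist_zz_iff_pathCost_le hbounds, ← Nat.cast_le (α := ℤ), pathCost_natCast,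
    map_id_bind_pure_natCast, score_map_natCast hne, hlen]
end

section
/- Let k > 3 be odd, let zzc(k) be the word obtained from zz(k−1, k−1) by replacing its last two letters (which are 2, 1) by k, k−1, and let γ be the permutation obtained from zzc(k) by breaking ties. Then γ circularly contains the permutation σ = (1, k−1, k−2, …, 3, 2, k), i.e., the unique permutation of length k with σ_1 = 1, σ_i = k+1−i for 2 ≤ i ≤ k−1, and σ_k = k. -/
/-- `zzc(k)`: the zigzag word `zz(k-1, k-1)` (with a trailing `1` appended) whose final
two letters `2, 1` are replaced by `k, k-1`; equivalently, drop the last letter of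
`zz(k-1,k-1)` and append `k, k-1`.  E.g. `zzc 5 = [1,3,4,2,1,3,4,5,4]`. -/
def zzc (k : ℕ) : List ℕ := (zz (k - 1) (k - 1)).dropLast ++ [k, k - 1]

/-- The permutation obtained from the word `ω` by breaking ties: position `i` receives
the rank (starting from 1) of the pair `(ω_i, −i)` in lexicographic order, i.e. the
number of positions `j` with `ω_j < ω_i`, or `ω_j = ω_i` and `j ≥ i`. -/
def breakTies (ω : List ℕ) : List ℕ :=
  ω.mapIdx fun i x =>
    ((ω.mapIdx fun j y => (j, y)).filter fun p => p.2 < x || (p.2 = x && i ≤ p.1)).length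

/-!
For `k = 2h + 1` with `h ≥ 3` the rotation `ρ₂(σ) = (2h-1, 2h-2, …, 2, 2h+1, 1, 2h)` occurs in
`γ`. The word `zz(2h, 2h)` consists of `h` copies of the block `1, 3, …, 2h-1, 2h, 2h-2, …, 2`.
Take the letters `2h-1, 2h-2, …, 2` of the first block, then the leading `1` of each of the
blocks `2, …, h-1` (ties are broken from right to left, so these `1`s keep decreasing), the
letter `2h` of block `h-1`, the leading `1` of block `h` (the smallest rank so far) and the
letter `2h` of block `h`, which ranks just below the earlier `2h`.
For `k = 5` the rotation `ρ₃(σ)` occurs at the even positions.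
-/

open Finset

theorem Finset.card_filter_le_lt_card_filter_le_iff {ι α : Type*} [LinearOrder α]
    {s : Finset ι} (g : ι → α) {i j : ι} (hj : j ∈ s) :
    #{x ∈ s | g x ≤ g i} < #{x ∈ s | g x ≤ g j} ↔ g i < g j := by
  have filter_mono {a b : α} (hab : a ≤ b) : {x ∈ s | g x ≤ a} ⊆ {x ∈ s | g x ≤ b} :=
    fun x hx => by
      simp only [mem_filter] at hx ⊢
      exact ⟨hx.1, hx.2.trans hab⟩
  constructor
  · intro h
    by_contra! hji
    exact (card_le_card (filter_mono hji)).not_gt h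
  · intro hij
    refine card_lt_card ⟨filter_mono hij.le, fun hsub => ?_⟩
    exact (mem_filter.1 (hsub (mem_filter.2 ⟨hj, le_rfl⟩))).2.not_gt hij

theorem List.mapIdx_prod_mk_eq {α : Type*} (l : List α) (d : α) :
    l.mapIdx (fun j y => (j, y)) = (List.range l.length).map fun j => (j, l.getD j d) := by
  refine List.ext_getElem (by simp) fun i hi _ => ?_
  simp [List.getD_eq_getElem?_getD, List.getElem?_eq_getElem (by simpa using hi)]

/-- `breakTies ω` ranks the positions `i` of `ω` by this key: first by letter, then from
right to left. -/
def tieKey (ω : List ℕ) (i : ℕ) : ℕ ×ₗ ℕᵒᵈ := toLex (ω.getD i 0, OrderDual.toDual i)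

theorem tieKey_injective (ω : List ℕ) : Function.Injective (tieKey ω) :=
  fun _ _ h => congrArg (fun x : ℕ ×ₗ ℕᵒᵈ => OrderDual.ofDual (ofLex x).2) h

theorem tieKey_lt_tieKey_iff_of_lt (ω : List ℕ) {i j : ℕ} (hij : i < j) :
    tieKey ω i < tieKey ω j ↔ ω.getD i 0 < ω.getD j 0 := by
  simp only [tieKey, Prod.Lex.toLex_lt_toLex, OrderDual.toDual_lt_toDual]
  constructor
  · rintro (h | ⟨-, h⟩)
    · exact h
    · omega
  · exact Or.inl

theorem breakTies_length (ω : List ℕ) : (breakTies ω).length = ω.length := by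
  simp [breakTies]

theorem getElem_breakTies (ω : List ℕ) {i : ℕ} (hi : i < (breakTies ω).length) :
    (breakTies ω)[i] = #{j ∈ range ω.length | tieKey ω j ≤ tieKey ω i} := by
  rw [breakTies_length] at hi
  simp only [breakTies, List.getElem_mapIdx, List.mapIdx_prod_mk_eq ω 0, List.filter_map,
    List.length_map, ← List.getD_eq_getElem ω 0 hi, Finset.card_def, Finset.filter_val,
    Finset.range_val, Multiset.range, Multiset.filter_coe, Multiset.coe_card]
  congr 2
  funext j
  simp [tieKey, Prod.Lex.toLex_le_toLex]

theorem breakTies_getElem_lt_iff (ω : List ℕ) {i j : ℕ} (hi : i < (breakTies ω).length)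
    (hj : j < (breakTies ω).length) :
    (breakTies ω)[i] < (breakTies ω)[j] ↔ tieKey ω i < tieKey ω j := by
  rw [getElem_breakTies, getElem_breakTies]
  exact card_filter_le_lt_card_filter_le_iff _ (mem_range.2 (breakTies_length ω ▸ hj))

theorem orderIsoContains_breakTies {ω σ : List ℕ} (hσ : σ.Nodup) (f : ℕ → ℕ)
    (hf_lt : ∀ p < σ.length, f p < ω.length)
    (hf_mono : ∀ q < σ.length, ∀ p < q, f p < f q)
    (hf_cmp : ∀ q < σ.length, ∀ p < q,
      ω.getD (f p) 0 < ω.getD (f q) 0 ↔ σ.getD p 0 < σ.getD q 0) :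
    OrderIsoContains (breakTies ω) σ := by
  refine ⟨fun p => ⟨f p, breakTies_length ω ▸ hf_lt p p.2⟩,
    fun p q hpq => hf_mono q q.2 p hpq, fun p q => ?_⟩
  simp only [List.get_eq_getElem]
  rw [breakTies_getElem_lt_iff]
  have cmp {p q : Fin σ.length} (hpq : p < q) :
      tieKey ω (f p) < tieKey ω (f q) ↔ σ[p.1] < σ[q.1] := by
    rw [tieKey_lt_tieKey_iff_of_lt ω (hf_mono q q.2 p hpq), hf_cmp q q.2 p hpq,
      List.getD_eq_getElem, List.getD_eq_getElem]
  rcases lt_trichotomy p q with hpq | rfl | hqp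
  · exact cmp hpq
  · simp
  · have hf : f q ≠ f p := (hf_mono p p.2 q hqp).ne
    have hσ' : σ[p.1] ≠ σ[q.1] := fun h => hqp.ne' (Fin.ext (hσ.getElem_inj_iff.1 h))
    rw [lt_iff_not_ge, ((tieKey_injective ω).ne hf).le_iff_lt, cmp hqp, not_lt,
      hσ'.le_iff_lt]

theorem filter_range_odd (h : ℕ) :
    (List.range (2 * h + 1)).filter (fun n => decide (n % 2 = 1)) =
      (List.range h).map (2 * · + 1) := by
  induction h with
  | zero => rfl
  | succ m ih =>
    rw [show 2 * (m + 1) + 1 = 2 * m + 1 + 1 + 1 by ring, List.range_succ, List.range_succ,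
      List.filter_append, List.filter_append, ih, List.range_succ, List.map_append]
    simp [Nat.add_mod]

theorem filter_range_even_ne_zero (h : ℕ) :
    (List.range (2 * h + 1)).filter (fun n => decide (n % 2 = 0) && n != 0) =
      (List.range h).map (2 * · + 2) := by
  induction h with
  | zero => rfl
  | succ m ih =>
    rw [show 2 * (m + 1) + 1 = 2 * m + 1 + 1 + 1 by ring, List.range_succ, List.range_succ,
      List.filter_append, List.filter_append, ih, List.range_succ, List.map_append]
    simp [Nat.add_mod]

/-- Two consecutive runs `R_{2i+1} R_{2i+2}` of `zz(m, 2h)`. -/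
def zigzagBlock (h : ℕ) : List ℕ :=
  (List.range h).map (2 * · + 1) ++ ((List.range h).map (2 * · + 2)).reverse

theorem zigzagBlock_length (h : ℕ) : (zigzagBlock h).length = 2 * h := by
  simp [zigzagBlock]
  ring

theorem zigzagBlock_getD (h : ℕ) {u : ℕ} (hu : u < 2 * h) :
    (zigzagBlock h).getD u 0 = if u < h then 2 * u + 1 else 4 * h - 2 * u := by
  unfold zigzagBlock
  split_ifs with hlt
  · rw [List.getD_append _ _ _ _ (by simpa using hlt),
      List.getD_eq_getElem _ _ (by simpa using hlt)]
    simp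
  · rw [List.getD_append_right _ _ _ _ (by simpa using hlt)]
    simp only [List.length_map, List.length_range]
    rw [List.getD_eq_getElem _ _ (by simp; omega), List.getElem_reverse]
    simp only [List.getElem_map, List.getElem_range, List.length_map, List.length_range]
    omega

theorem zz_two_mul (h m : ℕ) :
    zz (2 * m) (2 * h) = (List.replicate m (zigzagBlock h)).flatten := by
  induction m with
  | zero => rfl
  | succ n ih =>
    rw [zz, show 2 * (n + 1) = 2 * n + 1 + 1 by ring, List.range_succ, List.range_succ]
    simp only [List.map_append, List.flatten_append, List.map_cons, List.map_nil,
      List.flatten_cons, List.flatten_nil, List.append_nil]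
    rw [List.replicate_succ', List.flatten_append, List.append_assoc, ← ih, zz]
    congr 1
    simp [zrun, Nat.add_mod, filter_range_odd, filter_range_even_ne_zero, zigzagBlock]

theorem List.getD_flatten_replicate {α : Type*} (l : List α) (d : α) {n b u : ℕ} (hb : b < n)
    (hu : u < l.length) :
    ((List.replicate n l).flatten).getD (b * l.length + u) d = l.getD u d := by
  obtain ⟨n, rfl⟩ : ∃ n', n = n' + 1 := ⟨n - 1, by omega⟩
  induction b generalizing n with
  | zero =>
    rw [zero_mul, zero_add, List.replicate_succ, List.flatten_cons, List.getD_append _ _ _ _ hu]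
  | succ c ih =>
    rw [List.replicate_succ, List.flatten_cons, List.getD_append_right _ _ _ _ (by nlinarith),
      show (c + 1) * l.length + u - l.length = c * l.length + u by rw [Nat.succ_mul]; omega]
    obtain ⟨n, rfl⟩ : ∃ n', n = n' + 1 := ⟨n - 1, by omega⟩
    exact ih n (by omega)

theorem zzc_length (h : ℕ) (hh : 1 ≤ h) : (zzc (2 * h + 1)).length = h * (2 * h) + 1 := by
  have : 1 ≤ h * (2 * h) := by nlinarith
  simp [zzc, zz_two_mul, zigzagBlock_length]
  omega

theorem zzc_getD (h : ℕ) {b u : ℕ} (hb : b < h) (hu : u < 2 * h)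
    (hlt : b * (2 * h) + u + 1 < h * (2 * h)) :
    (zzc (2 * h + 1)).getD (b * (2 * h) + u) 0 = (zigzagBlock h).getD u 0 := by
  have hlen :
      ((List.replicate h (zigzagBlock h)).flatten).dropLast.length = h * (2 * h) - 1 := by
    simp [zigzagBlock_length]
  rw [zzc, Nat.add_sub_cancel, zz_two_mul, List.getD_append _ _ _ _ (by omega),
    List.getD_eq_getElem _ _ (by omega), List.getElem_dropLast, ← List.getD_eq_getElem _ 0,
    ← zigzagBlock_length h]
  exact List.getD_flatten_replicate _ _ hb (by rw [zigzagBlock_length]; omega)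

def layeredRotateTwo (k : ℕ) : List ℕ := (List.range (k - 3)).reverse.map (· + 2) ++ [k, 1, k - 1]

theorem rotate_two_layered {k : ℕ} (hk : 3 ≤ k) :
    (1 :: ((List.range (k - 2)).reverse.map (· + 2) ++ [k])).rotate 2 = layeredRotateTwo k := by
  obtain ⟨m, rfl⟩ : ∃ m, k = m + 3 := ⟨k - 3, by omega⟩
  simp [layeredRotateTwo, List.range_succ]

theorem layeredRotateTwo_length {k : ℕ} (hk : 3 ≤ k) : (layeredRotateTwo k).length = k := by
  simp [layeredRotateTwo]
  omega

theorem layeredRotateTwo_nodup {k : ℕ} (hk : 3 ≤ k) : (layeredRotateTwo k).Nodup := by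
  simp only [layeredRotateTwo, List.nodup_append, List.nodup_reverse, List.map_reverse]
  refine ⟨List.nodup_range.map (add_left_injective 2), by simp; omega, ?_⟩
  simp only [List.mem_reverse, List.mem_map, List.mem_range, List.mem_cons, List.not_mem_nil,
    or_false]
  rintro _ ⟨a, ha, rfl⟩ b hb
  omega

theorem layeredRotateTwo_getD {k p : ℕ} (hk : 3 ≤ k) (hp : p < k) :
    (layeredRotateTwo k).getD p 0 =
      if p < k - 3 then k - 2 - p else if p = k - 3 then k else if p = k - 2 then 1 else k - 1 := by
  obtain ⟨m, rfl⟩ : ∃ m, k = m + 3 := ⟨k - 3, by omega⟩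
  simp only [layeredRotateTwo, Nat.add_sub_cancel]
  by_cases hpm : p < m
  · rw [List.getD_append _ _ _ _ (by simpa using hpm),
      List.getD_eq_getElem _ _ (by simpa using hpm)]
    simp [hpm]
    omega
  · obtain ⟨i, rfl⟩ := Nat.exists_eq_add_of_le (not_lt.1 hpm)
    rw [List.getD_append_right _ _ _ _ (by simp)]
    simp only [List.length_map, List.length_reverse, List.length_range, Nat.add_sub_cancel_left]
    have hi : i < 3 := by omega
    interval_cases i <;> simp

theorem Nat.mul_add_lt_mul_add {n b₁ b₂ u₁ u₂ : ℕ} (hu₁ : u₁ < n)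
    (h : b₁ < b₂ ∨ b₁ = b₂ ∧ u₁ < u₂) : b₁ * n + u₁ < b₂ * n + u₂ := by
  rcases h with h | ⟨rfl, h⟩
  · nlinarith
  · omega

section Witness

variable (h : ℕ)

/-- The `p`-th letter of the occurrence of `ρ₂(σ)` in `zzc (2h+1)` is taken at offset
`witnessOffset h p` of the copy number `witnessBlock h p` (counted from `0`) of
`zigzagBlock h`. -/
def witnessBlock (p : ℕ) : ℕ :=
  if p < h then 0 else if p < 2 * h - 2 then p - h + 1 else if p = 2 * h - 2 then h - 2 else h - 1

def witnessOffset (p : ℕ) : ℕ :=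
  if p = 0 then h - 1 else if p < h then h + p else if p < 2 * h - 2 then 0
  else if p = 2 * h - 2 then h else if p = 2 * h - 1 then 0 else h

def witnessIndex (p : ℕ) : ℕ := witnessBlock h p * (2 * h) + witnessOffset h p

def witnessValue (p : ℕ) : ℕ :=
  if p = 0 then 2 * h - 1 else if p < h then 2 * h - 2 * p else if p < 2 * h - 2 then 1
  else if p = 2 * h - 2 then 2 * h else if p = 2 * h - 1 then 1 else 2 * h

variable {h}

theorem witnessIndex_lt_witnessIndex (hh : 3 ≤ h) {p q : ℕ} (hpq : p < q) (hq : q ≤ 2 * h) :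
    witnessIndex h p < witnessIndex h q := by
  apply Nat.mul_add_lt_mul_add
  · unfold witnessOffset; split_ifs <;> omega
  · unfold witnessBlock witnessOffset; split_ifs <;> omega

theorem witnessIndex_add_one_lt (hh : 3 ≤ h) {p : ℕ} (hp : p ≤ 2 * h) :
    witnessIndex h p + 1 < h * (2 * h) := by
  have : witnessIndex h p < (h - 1) * (2 * h) + (h + 1) := by
    apply Nat.mul_add_lt_mul_add
    · unfold witnessOffset; split_ifs <;> omega
    · unfold witnessBlock witnessOffset; split_ifs <;> omega
  have : h * (2 * h) = (h - 1) * (2 * h) + 2 * h := by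
    rw [← Nat.succ_mul, Nat.succ_eq_add_one, Nat.sub_add_cancel (by omega)]
  omega

theorem zzc_getD_witnessIndex (hh : 3 ≤ h) {p : ℕ} (hp : p ≤ 2 * h) :
    (zzc (2 * h + 1)).getD (witnessIndex h p) 0 = witnessValue h p := by
  have hoff : witnessOffset h p < 2 * h := by unfold witnessOffset; split_ifs <;> omega
  rw [witnessIndex, zzc_getD h _ hoff (witnessIndex_add_one_lt hh hp), zigzagBlock_getD h hoff]
  · unfold witnessOffset witnessValue; split_ifs <;> omega
  · unfold witnessBlock; split_ifs <;> omega

theorem witnessValue_lt_iff (hh : 3 ≤ h) {p q : ℕ} (hpq : p < q) (hq : q ≤ 2 * h) :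
    witnessValue h p < witnessValue h q ↔
      (layeredRotateTwo (2 * h + 1)).getD p 0 < (layeredRotateTwo (2 * h + 1)).getD q 0 := by
  rw [layeredRotateTwo_getD (by omega) (by omega), layeredRotateTwo_getD (by omega) (by omega)]
  simp only [show 2 * h + 1 - 3 = 2 * h - 2 by omega, show 2 * h + 1 - 2 = 2 * h - 1 by omega,
    show 2 * h + 1 - 1 = 2 * h by omega]
  unfold witnessValue
  split_ifs <;> omega

end Witness

/-- For odd `k > 3`, the permutation `γ` obtained by breaking ties from `zzc(k)`
circularly contains the pattern `σ = (1, k−1, k−2, …, 3, 2, k)` (the permutation with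
`σ₁ = 1`, `σᵢ = k+1−i` for `2 ≤ i ≤ k−1`, and `σ_k = k`). -/
theorem gamma_contains_layered2 (k : ℕ) (hk : 3 < k) (hodd : Odd k) :
    ∃ r < k, OrderIsoContains (breakTies (zzc k))
      ((1 :: (((List.range (k - 2)).reverse.map (· + 2)) ++ [k])).rotate r) := by
  obtain ⟨h, rfl⟩ := hodd
  rcases (show h = 2 ∨ 3 ≤ h by omega) with rfl | hh
  · exact ⟨3, by norm_num, orderIsoContains_breakTies (by decide) (2 * ·) (by decide) (by decide)
      (by decide)⟩
  refine ⟨2, by omega, ?_⟩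
  rw [rotate_two_layered (by omega)]
  refine orderIsoContains_breakTies (layeredRotateTwo_nodup (by omega)) (witnessIndex h)
    ?_ ?_ ?_ <;> rw [layeredRotateTwo_length (by omega)]
  · intro p hp
    rw [zzc_length h (by omega)]
    have := witnessIndex_add_one_lt hh (p := p) (by omega)
    omega
  · exact fun q hq p hpq => witnessIndex_lt_witnessIndex hh hpq (by omega)
  · intro q hq p hpq
    rw [zzc_getD_witnessIndex hh (by omega), zzc_getD_witnessIndex hh (by omega)]
    exact witnessValue_lt_iff hh hpq (by omega)
end
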